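/- Locality for sl₃: with the lattice W₃ generators τᵢ obtained from τ₁ by i−1 shifts along the chain X₁,Y₁,X₂,Y₂,…, and the Poisson bracket determined by {Xᵢ,Xⱼ}=2XᵢXⱼ (i<j), {Yᵢ,Yⱼ}=2YᵢYⱼ (i<j), {Xᵢ,Yⱼ}=XᵢYⱼ (i>j), {Xᵢ,Yⱼ}=−XᵢYⱼ (i≤j), one has {τ₁,τ₇} = 0, where τ₇ = τ₁ with all indices shifted by 3 (Xᵢ↦Xᵢ₊₃, Yᵢ↦Yᵢ₊₃). -/

import Mathlib

/-- Partial derivative with respect to the `k`-th `X`-variable (variables indexed by `ℕ`,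
1-based; index `0` is unused). -/
noncomputable def pdX (f : (ℕ → ℝ) → (ℕ → ℝ) → ℝ) (k : ℕ) (x y : ℕ → ℝ) : ℝ :=
  deriv (fun t => f (Function.update x k t) y) (x k)

/-- Partial derivative with respect to the `k`-th `Y`-variable. -/
noncomputable def pdY (f : (ℕ → ℝ) → (ℕ → ℝ) → ℝ) (k : ℕ) (x y : ℕ → ℝ) : ℝ :=
  deriv (fun t => f x (Function.update y k t)) (y k)

/-- Poisson bracket determined by `{Xₐ,X_b} = 2XₐX_b` (a < b), `{Yₐ,Y_b} = 2YₐY_b` (a < b),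
`{Xₐ,Y_b} = XₐY_b` if `a > b` and `−XₐY_b` if `a ≤ b`, extended to functions by the
Leibniz rule; the sums run over indices `0, …, N−1`, covering the supports involved. -/
noncomputable def pbXY (N : ℕ) (f g : (ℕ → ℝ) → (ℕ → ℝ) → ℝ) (x y : ℕ → ℝ) : ℝ :=
  (∑ a ∈ Finset.range N, ∑ b ∈ Finset.range N,
    if a < b then (pdX f a x y * pdX g b x y - pdX f b x y * pdX g a x y)
      * (2 * x a * x b) else 0)
  + (∑ a ∈ Finset.range N, ∑ b ∈ Finset.range N,
    if a < b then (pdY f a x y * pdY g b x y - pdY f b x y * pdY g a x y)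
      * (2 * y a * y b) else 0)
  + (∑ a ∈ Finset.range N, ∑ b ∈ Finset.range N,
    (pdX f a x y * pdY g b x y - pdY f b x y * pdX g a x y)
      * (if b < a then x a * y b else -(x a * y b)))

/-- The first `sl₃` lattice `W₃` generator `τ₁`. -/
noncomputable def t1 (x y : ℕ → ℝ) : ℝ :=
  x 2 * y 2 * (x 3 * y 3 + x 2 * (y 2 + y 3) + x 1 * (y 1 + y 2 + y 3)) /
    ((x 2 * y 2 + x 1 * (y 1 + y 2)) * (x 3 * y 3 + x 2 * (y 2 + y 3)))

/-- `τ₇`, i.e. `τ₁` with all indices shifted by `3` (`Xᵢ ↦ Xᵢ₊₃`, `Yᵢ ↦ Yᵢ₊₃`). -/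
noncomputable def t7 (x y : ℕ → ℝ) : ℝ :=
  x 5 * y 5 * (x 6 * y 6 + x 5 * (y 5 + y 6) + x 4 * (y 4 + y 5 + y 6)) /
    ((x 5 * y 5 + x 4 * (y 4 + y 5)) * (x 6 * y 6 + x 5 * (y 5 + y 6)))


/-!
In logarithmic coordinates the bracket has constant coefficients, which depend only on the
types (`X` or `Y`) of the two variables and on the order of their indices. All variables of `τ₁`
precede all variables of `τ₇`, so `{τ₁, τ₇}` is the bilinear form
`2 E_X τ₁ E_X τ₇ + 2 E_Y τ₁ E_Y τ₇ - E_X τ₁ E_Y τ₇ - E_Y τ₁ E_X τ₇` in the Euler operators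
`E_X = ∑ Xₐ ∂/∂Xₐ` and `E_Y = ∑ Y_b ∂/∂Y_b`. Since `τ₁` is homogeneous of degree `0` in the
`X`'s and in the `Y`'s separately, Euler's identity gives `E_X τ₁ = E_Y τ₁ = 0`.
-/

open Finset Function Filter Topology

theorem sum_mul_deriv_update_eq_zero_of_eventually_smul_eq {ι : Type*} [Fintype ι]
    [DecidableEq ι] {F : (ι → ℝ) → ℝ} {v : ι → ℝ} (hF : DifferentiableAt ℝ F v)
    (hhom : ∀ᶠ c in 𝓝 (1 : ℝ), F (c • v) = F v) :
    ∑ i, v i * deriv (fun t => F (update v i t)) (v i) = 0 := by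
  have hradial : HasDerivAt (fun c : ℝ => F (c • v)) (fderiv ℝ F v v) 1 :=
    hF.hasFDerivAt.comp_hasDerivAt_of_eq 1
      (by simpa using (hasDerivAt_id (1 : ℝ)).smul_const v) (one_smul ℝ v).symm
  have hconst : HasDerivAt (fun c : ℝ => F (c • v)) 0 1 :=
    (hasDerivAt_const 1 (F v)).congr_of_eventuallyEq hhom
  have hpartial (i : ι) :
      deriv (fun t => F (update v i t)) (v i) = fderiv ℝ F v (Pi.single i 1) :=
    (hF.hasFDerivAt.comp_hasDerivAt_of_eq (v i) (hasDerivAt_update v i (v i))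
      (update_eq_self i v).symm).deriv
  calc ∑ i, v i * deriv (fun t => F (update v i t)) (v i)
      = fderiv ℝ F v (∑ i, v i • Pi.single i 1) := by simp [hpartial]
    _ = 0 := by rw [← pi_eq_sum_univ']; exact hradial.unique hconst

theorem DependsOn.deriv_update_eq_zero {ι : Type*} [DecidableEq ι] {g : (ι → ℝ) → ℝ}
    {s : Set ι} (hg : DependsOn g s) {a : ι} (ha : a ∉ s) (z : ι → ℝ) :
    deriv (fun t => g (Function.update z a t)) (z a) = 0 := by
  have hconst : (fun t => g (Function.update z a t)) = fun _ => g z :=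
    funext fun t => hg fun i hi => Function.update_of_ne (ne_of_mem_of_not_mem hi ha) t z
  rw [hconst, deriv_const]

noncomputable def eulerSum (N : ℕ) (g : (ℕ → ℝ) → ℝ) (z : ℕ → ℝ) : ℝ :=
  ∑ a ∈ range N, z a * deriv (fun t => g (update z a t)) (z a)

-- `ℕ → ℝ` carries no norm, so differentiability is tested on the first `N` coordinates.
def extendByZero {N : ℕ} (v : Fin N → ℝ) (a : ℕ) : ℝ :=
  if h : a < N then v ⟨a, h⟩ else 0

theorem DependsOn.apply_extendByZero {N : ℕ} {g : (ℕ → ℝ) → ℝ} (hg : DependsOn g (Set.Iio N))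
    (z : ℕ → ℝ) : g (extendByZero (z ∘ Fin.val : Fin N → ℝ)) = g z :=
  hg fun a (ha : a < N) => by simp [extendByZero, ha]

theorem eulerSum_eq_zero {N : ℕ} {g : (ℕ → ℝ) → ℝ} {z : ℕ → ℝ} (hg : DependsOn g (Set.Iio N))
    (hdiff : DifferentiableAt ℝ (fun v : Fin N → ℝ => g (extendByZero v)) (z ∘ Fin.val))
    (hhom : ∀ᶠ c in 𝓝 (1 : ℝ), g (c • z) = g z) :
    eulerSum N g z = 0 := by
  have hupdate (i : Fin N) (t : ℝ) :
      g (extendByZero (update (z ∘ Fin.val) i t)) = g (update z i t) := by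
    rw [← update_comp_eq_of_injective _ Fin.val_injective, hg.apply_extendByZero]
  have heuler := sum_mul_deriv_update_eq_zero_of_eventually_smul_eq hdiff
    (hhom.mono fun c hc => (hg.apply_extendByZero (c • z)).trans
      (hc.trans (hg.apply_extendByZero z).symm))
  simp only [hupdate, comp_apply] at heuler
  rwa [Fin.sum_univ_eq_sum_range (fun a => z a * deriv (fun t => g (update z a t)) (z a))]
    at heuler

section Separated

variable {N m : ℕ}

theorem sum_sum_ite_lt_eq_of_separated {u v w : ℕ → ℝ} (hu : ∀ a, m ≤ a → u a = 0)
    (hv : ∀ b, b < m → v b = 0) :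
    ∑ a ∈ range N, ∑ b ∈ range N,
        (if a < b then (u a * v b - u b * v a) * (2 * w a * w b) else 0) =
      2 * (∑ a ∈ range N, w a * u a) * ∑ b ∈ range N, w b * v b := by
  rw [mul_assoc, sum_mul_sum, mul_sum]
  refine sum_congr rfl fun a _ => ?_
  rw [mul_sum]
  refine sum_congr rfl fun b _ => ?_
  rcases lt_or_ge a m with ha | ha
  · rcases lt_or_ge b m with hb | hb
    · simp [hv a ha, hv b hb]
    · rw [if_pos (by omega), hu b hb]
      ring
  · rw [hu a ha]
    split_ifs with hab
    · rw [hu b (by omega)]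
      ring
    · ring

theorem sum_sum_mixed_eq_of_separated {uX uY vX vY p q : ℕ → ℝ}
    (huX : ∀ a, m ≤ a → uX a = 0) (huY : ∀ a, m ≤ a → uY a = 0)
    (hvX : ∀ b, b < m → vX b = 0) (hvY : ∀ b, b < m → vY b = 0) :
    ∑ a ∈ range N, ∑ b ∈ range N,
        (uX a * vY b - uY b * vX a) * (if b < a then p a * q b else -(p a * q b)) =
      -((∑ a ∈ range N, p a * uX a) * ∑ b ∈ range N, q b * vY b) -
        (∑ b ∈ range N, q b * uY b) * ∑ a ∈ range N, p a * vX a := by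
  rw [sum_mul_sum, sum_mul_sum, sum_comm (s := range N) (t := range N)
    (f := fun b a => q b * uY b * (p a * vX a)), ← sum_neg_distrib, ← sum_sub_distrib]
  refine sum_congr rfl fun a _ => ?_
  rw [← sum_neg_distrib, ← sum_sub_distrib]
  refine sum_congr rfl fun b _ => ?_
  rcases lt_or_ge a m with ha | ha <;> rcases lt_or_ge b m with hb | hb
  · simp [hvX a ha, hvY b hb]
  · rw [if_neg (by omega), huY b hb]
    ring
  · rw [if_pos (by omega), huX a ha, hvY b hb]
    ring
  · simp [huX a ha, huY b hb]

theorem pbXY_eq_of_dependsOn {f g : (ℕ → ℝ) → (ℕ → ℝ) → ℝ} {x y : ℕ → ℝ}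
    (hfx : DependsOn (f · y) (Set.Iio m)) (hfy : DependsOn (f x ·) (Set.Iio m))
    (hgx : DependsOn (g · y) (Set.Ici m)) (hgy : DependsOn (g x ·) (Set.Ici m)) :
    pbXY N f g x y =
      2 * eulerSum N (f · y) x * eulerSum N (g · y) x
        + 2 * eulerSum N (f x ·) y * eulerSum N (g x ·) y
        - eulerSum N (f · y) x * eulerSum N (g x ·) y
        - eulerSum N (f x ·) y * eulerSum N (g · y) x := by
  have hfX (a : ℕ) (ha : m ≤ a) : pdX f a x y = 0 := hfx.deriv_update_eq_zero (by simpa) x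
  have hfY (a : ℕ) (ha : m ≤ a) : pdY f a x y = 0 := hfy.deriv_update_eq_zero (by simpa) y
  have hgX (b : ℕ) (hb : b < m) : pdX g b x y = 0 := hgx.deriv_update_eq_zero (by simpa) x
  have hgY (b : ℕ) (hb : b < m) : pdY g b x y = 0 := hgy.deriv_update_eq_zero (by simpa) y
  rw [pbXY, sum_sum_ite_lt_eq_of_separated hfX hgX, sum_sum_ite_lt_eq_of_separated hfY hgY,
    sum_sum_mixed_eq_of_separated hfX hfY hgX hgY]
  simp only [eulerSum, pdX, pdY]
  ring

end Separated

theorem t1_smul_x {c : ℝ} (hc : c ≠ 0) (x y : ℕ → ℝ) : t1 (c • x) y = t1 x y := by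
  simp only [t1, Pi.smul_apply, smul_eq_mul]
  conv_rhs => rw [← mul_div_mul_left _ _ (pow_ne_zero 2 hc)]
  congr 1 <;> ring

theorem t1_smul_y {c : ℝ} (hc : c ≠ 0) (x y : ℕ → ℝ) : t1 x (c • y) = t1 x y := by
  simp only [t1, Pi.smul_apply, smul_eq_mul]
  conv_rhs => rw [← mul_div_mul_left _ _ (pow_ne_zero 2 hc)]
  congr 1 <;> ring

theorem dependsOn_t1_x (y : ℕ → ℝ) : DependsOn (t1 · y) (Set.Iio 4) := fun x x' h => by
  simp only [t1, h 1 (by simp), h 2 (by simp), h 3 (by simp)]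

theorem dependsOn_t1_y (x : ℕ → ℝ) : DependsOn (t1 x ·) (Set.Iio 4) := fun y y' h => by
  simp only [t1, h 1 (by simp), h 2 (by simp), h 3 (by simp)]

theorem dependsOn_t7_x (y : ℕ → ℝ) : DependsOn (t7 · y) (Set.Ici 4) := fun x x' h => by
  simp only [t7, h 4 (by simp), h 5 (by simp), h 6 (by simp)]

theorem dependsOn_t7_y (x : ℕ → ℝ) : DependsOn (t7 x ·) (Set.Ici 4) := fun y y' h => by
  simp only [t7, h 4 (by simp), h 5 (by simp), h 6 (by simp)]

section Differentiability

variable {x y : ℕ → ℝ}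

theorem differentiableAt_t1_x (h1 : x 2 * y 2 + x 1 * (y 1 + y 2) ≠ 0)
    (h2 : x 3 * y 3 + x 2 * (y 2 + y 3) ≠ 0) :
    DifferentiableAt ℝ (fun v : Fin 7 → ℝ => t1 (extendByZero v) y) (x ∘ Fin.val) := by
  simp only [t1, extendByZero, Nat.reduceLT, ↓reduceDIte, Fin.reduceFinMk, Fin.isValue,
    Nat.one_lt_ofNat, Fin.mk_one]
  fun_prop (disch := simpa using mul_ne_zero h1 h2)

theorem differentiableAt_t1_y (h1 : x 2 * y 2 + x 1 * (y 1 + y 2) ≠ 0)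
    (h2 : x 3 * y 3 + x 2 * (y 2 + y 3) ≠ 0) :
    DifferentiableAt ℝ (fun v : Fin 7 → ℝ => t1 x (extendByZero v)) (y ∘ Fin.val) := by
  simp only [t1, extendByZero, Nat.reduceLT, ↓reduceDIte, Fin.reduceFinMk, Fin.isValue,
    Nat.one_lt_ofNat, Fin.mk_one]
  fun_prop (disch := simpa using mul_ne_zero h1 h2)

end Differentiability

theorem stmt_15_general (x y : ℕ → ℝ)
    (h1 : x 2 * y 2 + x 1 * (y 1 + y 2) ≠ 0)
    (h2 : x 3 * y 3 + x 2 * (y 2 + y 3) ≠ 0) :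
    pbXY 7 t1 t7 x y = 0 := by
  have hscale : ∀ᶠ c in 𝓝 (1 : ℝ), c ≠ 0 := eventually_ne_nhds one_ne_zero
  have hEX : eulerSum 7 (t1 · y) x = 0 :=
    eulerSum_eq_zero ((dependsOn_t1_x y).mono (Set.Iio_subset_Iio (by norm_num)))
      (differentiableAt_t1_x h1 h2) (hscale.mono fun c hc => t1_smul_x hc x y)
  have hEY : eulerSum 7 (t1 x ·) y = 0 :=
    eulerSum_eq_zero ((dependsOn_t1_y x).mono (Set.Iio_subset_Iio (by norm_num)))
      (differentiableAt_t1_y h1 h2) (hscale.mono fun c hc => t1_smul_y hc x y)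
  rw [pbXY_eq_of_dependsOn (dependsOn_t1_x y) (dependsOn_t1_y x) (dependsOn_t7_x y)
    (dependsOn_t7_y x), hEX, hEY]
  ring

/-- Locality for `sl₃`: `{τ₁,τ₇} = 0`. -/
theorem stmt_15 (x y : ℕ → ℝ)
    (h1 : x 2 * y 2 + x 1 * (y 1 + y 2) ≠ 0)
    (h2 : x 3 * y 3 + x 2 * (y 2 + y 3) ≠ 0)
    (h3 : x 5 * y 5 + x 4 * (y 4 + y 5) ≠ 0)
    (h4 : x 6 * y 6 + x 5 * (y 5 + y 6) ≠ 0) :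
    pbXY 7 t1 t7 x y = 0 :=
  stmt_15_general x y h1 h2
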